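/- arXiv:2210.00423 — 2 statements merged into one kernel-verified Lean document; each statement's English description precedes it below -/
import Mathlib

section
/- Let H and G be symmetric positive semidefinite T × T matrices with ‖H − G‖_F ≤ 1/√T, where ‖·‖_F is the Frobenius norm. Then log det(I + H) ≤ log det(I + G) + 1. -/
open Matrix Finset in
theorem aux_trace_eig {n : Type*} [Fintype n] [DecidableEq n] {B : Matrix n n ℝ}
    (hB : B.IsHermitian) : B.trace = ∑ i, hB.eigenvalues i := by
  conv_lhs => rw [hB.spectral_theorem]
  rw [Unitary.conjStarAlgAut_apply, Matrix.trace_mul_cycle]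
  simp [Matrix.trace_diagonal, Unitary.coe_star_mul_self, RCLike.ofReal_real_eq_id]

open Matrix Finset in
theorem aux_core {n : Type*} [Fintype n] [DecidableEq n] (C : Matrix n n ℝ)
    (hC : C.PosSemidef) (hCdet : 0 < C.det) (d : n → ℝ) (hd : ∀ i, 0 < d i) :
    Real.log C.det ≤ (∑ i, Real.log (d i)) + (∑ i, C i i / d i) - Fintype.card n := by
  set e : n → ℝ := fun i => (Real.sqrt (d i))⁻¹ with he
  have he0 : ∀ i, 0 < e i := fun i => inv_pos.2 (Real.sqrt_pos.2 (hd i))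
  have he2 : ∀ i, e i * e i = (d i)⁻¹ := fun i => by
    rw [← mul_inv]
    rw [Real.mul_self_sqrt (hd i).le]
  set E : Matrix n n ℝ := Matrix.diagonal e with hE
  have hEH : Eᴴ = E := by simp [hE, Matrix.diagonal_conjTranspose]
  set M : Matrix n n ℝ := E * C * E with hM
  have hMpsd : M.PosSemidef := by
    have := hC.mul_mul_conjTranspose_same E
    rwa [hEH] at this
  have hdetE : E.det = ∏ i, e i := Matrix.det_diagonal
  have hdetM : M.det = C.det * (∏ i, (d i)⁻¹) := by
    rw [hM, Matrix.det_mul, Matrix.det_mul, hdetE]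
    rw [mul_comm, ← mul_assoc, ← Finset.prod_mul_distrib]
    simp_rw [he2]
    ring
  have hdetMpos : 0 < M.det := by
    rw [hdetM]
    exact mul_pos hCdet (Finset.prod_pos fun i _ => inv_pos.2 (hd i))
  have hMher := hMpsd.isHermitian
  set lam := hMher.eigenvalues with hlam
  have hlam0 : ∀ j, 0 ≤ lam j := hMpsd.eigenvalues_nonneg
  have hdetprod : M.det = ∏ j, lam j := by
    have := hMher.det_eq_prod_eigenvalues
    simpa using this
  have hlampos : ∀ j, 0 < lam j := by
    intro j
    rcases lt_or_eq_of_le (hlam0 j) with h | h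
    · exact h
    · exfalso
      have : M.det = 0 := by
        rw [hdetprod]
        exact Finset.prod_eq_zero (Finset.mem_univ j) h.symm
      exact hdetMpos.ne' this
  have htr : M.trace = ∑ j, lam j := aux_trace_eig hMher
  have hMdiag : ∀ i, M i i = e i * C i i * e i := by
    intro i
    show (Matrix.diagonal e * C * Matrix.diagonal e) i i = _
    rw [Matrix.mul_diagonal, Matrix.diagonal_mul]
  have htr2 : M.trace = ∑ i, C i i / d i := by
    rw [Matrix.trace]
    refine Finset.sum_congr rfl fun i _ => ?_
    show M i i = _
    rw [hMdiag i, mul_comm (e i) (C i i), mul_assoc, he2, div_eq_mul_inv]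
  have hkey : ∑ j, Real.log (lam j) ≤ ∑ j, (lam j - 1) :=
    Finset.sum_le_sum fun j _ => Real.log_le_sub_one_of_pos (hlampos j)
  have hlogM : Real.log M.det = ∑ j, Real.log (lam j) := by
    rw [hdetprod, Real.log_prod fun j _ => (hlampos j).ne']
  have hlogC : Real.log C.det = Real.log M.det + ∑ i, Real.log (d i) := by
    rw [hdetM, Real.log_mul hCdet.ne' (Finset.prod_pos fun i _ => inv_pos.2 (hd i)).ne',
      Real.log_prod (fun i _ => (inv_pos.2 (hd i)).ne')]
    simp_rw [Real.log_inv]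
    rw [add_assoc, ← Finset.sum_add_distrib]
    simp
  rw [hlogC, hlogM]
  have hsum : ∑ j, (lam j - 1) = (∑ i, C i i / d i) - Fintype.card n := by
    rw [Finset.sum_sub_distrib, ← htr, htr2]
    simp [Finset.card_univ]
  linarith [hkey, hsum.le, hsum.ge]

open Matrix in
theorem aux_eig_ge_one {n : Type*} [Fintype n] [DecidableEq n] {G : Matrix n n ℝ}
    (hG : G.PosSemidef) (hA : (1 + G : Matrix n n ℝ).IsHermitian) (i : n) :
    1 ≤ hA.eigenvalues i := by
  have hv := hA.eigenvalues_eq i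
  set v : n → ℝ := ⇑(hA.eigenvectorBasis i) with hvdef
  have hnorm : dotProduct (star v) v = 1 := by
    have h1 : ‖hA.eigenvectorBasis i‖ = 1 := hA.eigenvectorBasis.orthonormal.1 i
    have h2 : (inner ℝ (hA.eigenvectorBasis i) (hA.eigenvectorBasis i) : ℝ) = 1 := by
      rw [real_inner_self_eq_norm_sq, h1]; norm_num
    rw [← h2, EuclideanSpace.inner_eq_star_dotProduct, dotProduct_comm]
  have hGnn : 0 ≤ dotProduct (star v) (G *ᵥ v) := by
    have := hG.re_dotProduct_nonneg v
    simpa using this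
  rw [hv]
  have hmv : (1 + G) *ᵥ v = v + G *ᵥ v := by
    rw [Matrix.add_mulVec, Matrix.one_mulVec]
  rw [hmv]
  simp only [RCLike.re_to_real]
  rw [dotProduct_add, hnorm]
  linarith

open Matrix in
theorem logdet_le_logdet_add_one (T : ℕ) (H G : Matrix (Fin T) (Fin T) ℝ)
    (hH : H.PosSemidef) (hG : G.PosSemidef)
    (hFro : Real.sqrt (∑ i : Fin T, ∑ j : Fin T, (H i j - G i j)^2)
            ≤ 1 / Real.sqrt T) :
    Real.log (1 + H).det ≤ Real.log (1 + G).det + 1 := by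
  rcases Nat.eq_zero_or_pos T with hT | hT
  · subst hT
    simp [Matrix.det_fin_zero]
  -- setup
  set A : Matrix (Fin T) (Fin T) ℝ := 1 + G with hAdef
  set B : Matrix (Fin T) (Fin T) ℝ := 1 + H with hBdef
  have hA : A.PosDef := Matrix.PosDef.one.add_posSemidef hG
  have hB : B.PosDef := Matrix.PosDef.one.add_posSemidef hH
  have hAh : A.IsHermitian := hA.isHermitian
  set α : Fin T → ℝ := hAh.eigenvalues with hαdef
  have hα1 : ∀ i, 1 ≤ α i := aux_eig_ge_one hG hAh
  have hαpos : ∀ i, 0 < α i := fun i => lt_of_lt_of_le one_pos (hα1 i)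
  set U : Matrix (Fin T) (Fin T) ℝ := (Matrix.IsHermitian.eigenvectorUnitary hAh : Matrix (Fin T) (Fin T) ℝ) with hUdef
  have hU1 : Uᴴ * U = 1 := by
    rw [← Matrix.star_eq_conjTranspose]
    exact (Matrix.mem_unitaryGroup_iff').mp (Matrix.IsHermitian.eigenvectorUnitary hAh).2
  have hU2 : U * Uᴴ = 1 := by
    rw [← Matrix.star_eq_conjTranspose]
    exact (Matrix.mem_unitaryGroup_iff).mp (Matrix.IsHermitian.eigenvectorUnitary hAh).2
  have hdiagA : Uᴴ * A * U = Matrix.diagonal α := by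
    have := hAh.conjStarAlgAut_star_eigenvectorUnitary
    simpa [RCLike.ofReal_real_eq_id, Matrix.star_eq_conjTranspose] using this
  -- the matrix C
  set C : Matrix (Fin T) (Fin T) ℝ := Uᴴ * B * U with hCdef
  have hCpsd : C.PosSemidef := hB.posSemidef.conjTranspose_mul_mul_same U
  have hdetC : C.det = B.det := by
    have h : U.det * Uᴴ.det = 1 := by rw [← Matrix.det_mul, hU2, Matrix.det_one]
    rw [hCdef, Matrix.det_mul, Matrix.det_mul]
    linear_combination B.det * h
  have hCdetpos : 0 < C.det := hdetC ▸ hB.det_pos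
  -- core inequality
  have hcore := aux_core C hCpsd hCdetpos α hαpos
  rw [hdetC] at hcore
  -- log det A = sum of logs
  have hlogA : Real.log A.det = ∑ i, Real.log (α i) := by
    have hd : A.det = ∏ i, α i := by
      have := hAh.det_eq_prod_eigenvalues
      simpa using this
    rw [hd, Real.log_prod fun i _ => (hαpos i).ne']
  -- helper: trace of U * diagonal f * Uᴴ
  have htrU : ∀ f : Fin T → ℝ, (U * Matrix.diagonal f * Uᴴ).trace = ∑ i, f i := by
    intro f
    rw [Matrix.trace_mul_cycle, hU1, Matrix.one_mul, Matrix.trace_diagonal]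
  -- helper: product of conjugated diagonals
  have hmulU : ∀ f g : Fin T → ℝ,
      (U * Matrix.diagonal f * Uᴴ) * (U * Matrix.diagonal g * Uᴴ)
        = U * Matrix.diagonal (fun i => f i * g i) * Uᴴ := by
    intro f g
    calc (U * Matrix.diagonal f * Uᴴ) * (U * Matrix.diagonal g * Uᴴ)
        = U * Matrix.diagonal f * (Uᴴ * U) * (Matrix.diagonal g * Uᴴ) := by
          simp only [Matrix.mul_assoc]
      _ = U * (Matrix.diagonal f * Matrix.diagonal g) * Uᴴ := by
          rw [hU1, Matrix.mul_one]
          simp only [Matrix.mul_assoc]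
      _ = U * Matrix.diagonal (fun i => f i * g i) * Uᴴ := by
          rw [Matrix.diagonal_mul_diagonal]
  set P : Matrix (Fin T) (Fin T) ℝ := U * Matrix.diagonal (fun i => (α i)⁻¹) * Uᴴ with hPdef
  set D : Matrix (Fin T) (Fin T) ℝ := H - G with hDdef
  -- key trace decomposition
  have hBAD : B = A + D := by
    rw [hAdef, hBdef, hDdef]; abel
  have hsplit : ∑ i, C i i / α i = (T : ℝ) + (P * D).trace := by
    have h1 : ∑ i, C i i / α i = (Matrix.diagonal (fun i => (α i)⁻¹) * C).trace := by
      rw [Matrix.trace]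
      refine (Finset.sum_congr rfl fun i _ => ?_).symm
      show (Matrix.diagonal (fun i => (α i)⁻¹) * C) i i = _
      rw [Matrix.diagonal_mul, div_eq_mul_inv, mul_comm]
    have h2 : Matrix.diagonal (fun i => (α i)⁻¹) * C
        = Matrix.diagonal (fun i => (α i)⁻¹) * Matrix.diagonal α
          + Matrix.diagonal (fun i => (α i)⁻¹) * (Uᴴ * D * U) := by
      rw [hCdef, hBAD, ← Matrix.mul_add]
      congr 1
      rw [← hdiagA]
      rw [Matrix.mul_add, Matrix.add_mul]
    have h3 : (Matrix.diagonal (fun i => (α i)⁻¹) * Matrix.diagonal α).trace = (T : ℝ) := by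
      rw [Matrix.diagonal_mul_diagonal, Matrix.trace_diagonal]
      rw [Finset.sum_congr rfl fun i _ => inv_mul_cancel₀ (hαpos i).ne']
      simp
    have h4 : (Matrix.diagonal (fun i => (α i)⁻¹) * (Uᴴ * D * U)).trace = (P * D).trace := by
      calc (Matrix.diagonal (fun i => (α i)⁻¹) * (Uᴴ * D * U)).trace
          = ((Matrix.diagonal (fun i => (α i)⁻¹) * Uᴴ * D) * U).trace := by
            simp only [Matrix.mul_assoc]
        _ = (U * (Matrix.diagonal (fun i => (α i)⁻¹) * Uᴴ * D)).trace :=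
            Matrix.trace_mul_comm _ _
        _ = (P * D).trace := by rw [hPdef]; simp only [Matrix.mul_assoc]
    rw [h1, h2, Matrix.trace_add, h3, h4]
  -- Frobenius bound on P
  have hPsq : ∑ i : Fin T, ∑ j : Fin T, (P i j)^2 ≤ (T : ℝ) := by
    have hPt : Pᵀ = P := by
      have : Pᴴ = P := by
        rw [hPdef]
        simp only [Matrix.conjTranspose_mul, Matrix.conjTranspose_conjTranspose,
          Matrix.diagonal_conjTranspose]
        simp [Matrix.mul_assoc]
      simpa using this
    have htrPP : (P * P).trace = ∑ i, ((α i)⁻¹ * (α i)⁻¹) := by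
      rw [hPdef, hmulU, htrU]
    have hPsymm : ∀ i j, P i j = P j i := fun i j => congrFun (congrFun hPt j) i
    have hfro : ∑ i : Fin T, ∑ j : Fin T, (P i j)^2 = (P * P).trace := by
      rw [Matrix.trace]
      refine Finset.sum_congr rfl fun i _ => ?_
      rw [Matrix.diag_apply, Matrix.mul_apply]
      refine Finset.sum_congr rfl fun j _ => ?_
      rw [sq, show P j i = P i j from hPsymm j i]
    rw [hfro, htrPP]
    calc ∑ i, ((α i)⁻¹ * (α i)⁻¹) ≤ ∑ _i : Fin T, (1 : ℝ) := by
          refine Finset.sum_le_sum fun i _ => ?_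
          have h1 : (α i)⁻¹ ≤ 1 := inv_le_one_of_one_le₀ (hα1 i)
          have h0 : 0 ≤ (α i)⁻¹ := (inv_pos.2 (hαpos i)).le
          nlinarith
      _ = (T : ℝ) := by simp
  -- Cauchy-Schwarz bound on trace (P * D)
  have htrPD : (P * D).trace ≤ 1 := by
    have hDsymm : ∀ i j, D j i = D i j := by
      intro i j
      have hh : Hᴴ = H := hH.isHermitian
      have hg : Gᴴ = G := hG.isHermitian
      have h1 : H j i = H i j := by
        conv_lhs => rw [← hh]
        simp [Matrix.conjTranspose_apply]
      have h2 : G j i = G i j := by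
        conv_lhs => rw [← hg]
        simp [Matrix.conjTranspose_apply]
      rw [hDdef]
      simp [Matrix.sub_apply, h1, h2]
    have hexp : (P * D).trace = ∑ p : Fin T × Fin T, P p.1 p.2 * D p.1 p.2 := by
      rw [Matrix.trace, Fintype.sum_prod_type]
      refine Finset.sum_congr rfl fun i _ => ?_
      rw [Matrix.diag_apply, Matrix.mul_apply]
      exact Finset.sum_congr rfl fun j _ => by rw [hDsymm i j]
    have hcs := Real.sum_mul_le_sqrt_mul_sqrt Finset.univ
      (fun p : Fin T × Fin T => P p.1 p.2) (fun p => D p.1 p.2)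
    rw [hexp]
    have hsq1 : Real.sqrt (∑ p : Fin T × Fin T, (P p.1 p.2)^2) ≤ Real.sqrt T := by
      apply Real.sqrt_le_sqrt
      rw [Fintype.sum_prod_type]
      exact hPsq
    have hsq2 : Real.sqrt (∑ p : Fin T × Fin T, (D p.1 p.2)^2) ≤ 1 / Real.sqrt T := by
      rw [Fintype.sum_prod_type]
      exact hFro
    have hTpos : (0 : ℝ) < Real.sqrt T := Real.sqrt_pos.2 (by exact_mod_cast hT)
    calc ∑ p : Fin T × Fin T, P p.1 p.2 * D p.1 p.2
        ≤ Real.sqrt (∑ p : Fin T × Fin T, (P p.1 p.2)^2)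
          * Real.sqrt (∑ p : Fin T × Fin T, (D p.1 p.2)^2) := hcs
      _ ≤ Real.sqrt T * (1 / Real.sqrt T) := by
          apply mul_le_mul hsq1 hsq2 (Real.sqrt_nonneg _)
          exact (Real.sqrt_nonneg _)
      _ = 1 := by field_simp
  -- assemble
  have hcard : (Fintype.card (Fin T) : ℝ) = (T : ℝ) := by simp
  rw [hlogA] at *
  calc Real.log B.det ≤ (∑ i, Real.log (α i)) + (∑ i, C i i / α i) - Fintype.card (Fin T) := hcore
    _ = (∑ i, Real.log (α i)) + (P * D).trace := by rw [hsplit, hcard]; ring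
    _ ≤ (∑ i, Real.log (α i)) + 1 := by linarith
end

section
/- Let ε ∈ (0,1), γ ≥ 1, and suppose for all t the estimates satisfy |f_t − a_t| ≤ β_t and |g_t − b_t| ≤ β_t with a_t − b_t not in (−ε, ε), where β_t is nonincreasing and 2(γ+1)β_t ≤ ε for all t > T̄. If the decision indicator is I_t = 1 precisely when f_t − g_t < 2γβ_t, then ∑_{t=1}^T I_t ≤ T̄ whenever f_t ≥ g_t for all t (i.e., f_t is the maximal estimate). -/
/-!
Once the confidence width is below the margin, the estimated gap `f - g` sits within `2β` of the
true gap `a - b`, whose absolute value is at least `ε`. A true gap `≤ -ε` would make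
`0 ≤ f - g ≤ 2β - ε`, which by `2(γ+1)β ≤ ε` forces `γβ ≤ 0`; a true gap `≥ ε` gives
`f - g ≥ ε - 2β ≥ 2γβ`. Either way no label is requested after round `T̄`.
-/

open Finset

theorem two_mul_mul_le_sub_of_margin {x y u v β ε γ : ℝ}
    (hx : |x - u| ≤ β) (hy : |y - v| ≤ β) (hmargin : u - v ∉ Set.Ioo (-ε) ε)
    (hsmall : 2 * (γ + 1) * β ≤ ε) (hyx : y ≤ x) :
    2 * γ * β ≤ x - y := by
  obtain ⟨hxu, hux⟩ := abs_le.mp hx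
  obtain ⟨hyv, hvy⟩ := abs_le.mp hy
  rcases le_or_gt (u - v) (-ε) with hneg | hneg
  · linarith
  · have hpos : ε ≤ u - v := not_lt.mp fun h => hmargin ⟨hneg, h⟩
    linarith

theorem sum_indicator_Icc_le {p : ℕ → Prop} [DecidablePred p] (T n : ℕ)
    (hp : ∀ t, n < t → ¬ p t) :
    ∑ t ∈ Icc 1 T, (if p t then 1 else 0) ≤ n := by
  rw [sum_boole, Nat.cast_id]
  calc #{t ∈ Icc 1 T | p t} ≤ #(Icc 1 n) := by
        refine card_le_card fun t ht => ?_
        rw [mem_filter, mem_Icc] at ht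
        exact mem_Icc.mpr ⟨ht.1.1, not_lt.mp fun h => hp t h ht.2⟩
    _ = n := by simp

theorem label_complexity_bound_general (T Tbar : ℕ) (ε γ : ℝ)
    (f g a b β : ℕ → ℝ)
    (hfa : ∀ t, |f t - a t| ≤ β t) (hgb : ∀ t, |g t - b t| ≤ β t)
    (hmargin : ∀ t, a t - b t ∉ Set.Ioo (-ε) ε)
    (hsmall : ∀ t, Tbar < t → 2 * (γ + 1) * β t ≤ ε)
    (hfg : ∀ t, g t ≤ f t) :
    ∑ t ∈ Finset.Icc 1 T, (if f t - g t < 2 * γ * β t then 1 else 0) ≤ Tbar :=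
  sum_indicator_Icc_le T Tbar fun t ht =>
    not_lt.mpr (two_mul_mul_le_sub_of_margin (hfa t) (hgb t) (hmargin t) (hsmall t ht) (hfg t))

theorem label_complexity_bound (T Tbar : ℕ) (ε γ : ℝ)
    (f g a b β : ℕ → ℝ)
    (hε : ε ∈ Set.Ioo (0:ℝ) 1) (hγ : 1 ≤ γ)
    (hfa : ∀ t, |f t - a t| ≤ β t) (hgb : ∀ t, |g t - b t| ≤ β t)
    (hmargin : ∀ t, a t - b t ∉ Set.Ioo (-ε) ε)
    (hβ : Antitone β)
    (hsmall : ∀ t, Tbar < t → 2 * (γ + 1) * β t ≤ ε)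
    (hfg : ∀ t, g t ≤ f t) :
    ∑ t ∈ Finset.Icc 1 T, (if f t - g t < 2 * γ * β t then 1 else 0) ≤ Tbar :=
  label_complexity_bound_general T Tbar ε γ f g a b β hfa hgb hmargin hsmall hfg
end
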